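/- Let X and Y be topological spaces and C the class of all continuous partial functions from X to Y (a partial function f is continuous if the preimage under f of every open set of Y equals the intersection of dom(f) with some open set of X, equivalently f is continuous as a function on dom(f) with the subspace topology). Let A be a finite collection of subsets of X. If for each subcollection K of A some open set of X separates ⋃K \ ⋃(A\K) from ⋃(A\K) \ ⋃K, then A is strongly join permitting for C. -/
import Mathlib


open Set

/-- Restriction of a partial function to a set. -/
def pRestrict {α β : Type*} (f : α →. β) (A : Set α) : α →. β :=
  fun x => ⟨x ∈ A ∧ (f x).Dom, fun h => (f x).get h.2⟩

/-- A collection `𝒜` of sets is strongly join permitting for a class `C` of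
partial functions if every partial function whose domain is contained in `⋃₀ 𝒜`
and whose restriction to each member of `𝒜` belongs to `C` itself belongs to `C`. -/
def SJP {α β : Type*} (C : Set (α →. β)) (𝒜 : Set (Set α)) : Prop :=
  ∀ f : α →. β, f.Dom ⊆ ⋃₀ 𝒜 → (∀ A ∈ 𝒜, pRestrict f A ∈ C) → f ∈ C

/-- A partial function between topological spaces is continuous if the preimage of
every open set is the intersection of the domain with an open set. -/
def ContinuousPFun {X Y : Type*} [TopologicalSpace X] [TopologicalSpace Y]
    (f : X →. Y) : Prop :=
  ∀ V : Set Y, IsOpen V → ∃ O : Set X, IsOpen O ∧ f.preimage V = f.Dom ∩ O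


lemma mem_pRestrict {α β : Type*} {f : α →. β} {A : Set α} {x : α} {v : β} :
    v ∈ pRestrict f A x ↔ x ∈ A ∧ v ∈ f x := by
  constructor
  · rintro ⟨h, rfl⟩
    exact ⟨h.1, Part.get_mem h.2⟩
  · rintro ⟨hA, hv⟩
    obtain ⟨hd, rfl⟩ := hv
    exact ⟨⟨hA, hd⟩, rfl⟩

lemma dom_pRestrict {α β : Type*} (f : α →. β) (A : Set α) :
    (pRestrict f A).Dom = A ∩ f.Dom := rfl

theorem stmt_8 {X Y : Type*} [TopologicalSpace X] [TopologicalSpace Y]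
    (𝒜 : Set (Set X)) (hfin : 𝒜.Finite)
    (hsep : ∀ 𝒦 ⊆ 𝒜, ∃ H : Set X, IsOpen H ∧
      ⋃₀ 𝒦 \ ⋃₀ (𝒜 \ 𝒦) ⊆ H ∧ H ∩ (⋃₀ (𝒜 \ 𝒦) \ ⋃₀ 𝒦) = ∅) :
    SJP {f : X →. Y | ContinuousPFun f} 𝒜 := by
  intro f hdom hres V hV
  have key : ∀ A : Set X, ∃ O : Set X, IsOpen O ∧
      (A ∈ 𝒜 → (pRestrict f A).preimage V = (pRestrict f A).Dom ∩ O) := by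
    intro A
    by_cases hA : A ∈ 𝒜
    · obtain ⟨O, h1, h2⟩ := hres A hA V hV
      exact ⟨O, h1, fun _ => h2⟩
    · exact ⟨∅, isOpen_empty, fun h => absurd h hA⟩
  choose O hOopen hOeq using key
  have key2 : ∀ 𝒦 : Set (Set X), ∃ H : Set X, IsOpen H ∧ (𝒦 ⊆ 𝒜 →
      (⋃₀ 𝒦 \ ⋃₀ (𝒜 \ 𝒦) ⊆ H ∧ H ∩ (⋃₀ (𝒜 \ 𝒦) \ ⋃₀ 𝒦) = ∅)) := by
    intro 𝒦
    by_cases h𝒦 : 𝒦 ⊆ 𝒜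
    · obtain ⟨H, h1, h2, h3⟩ := hsep 𝒦 h𝒦
      exact ⟨H, h1, fun _ => ⟨h2, h3⟩⟩
    · exact ⟨∅, isOpen_empty, fun h => absurd h h𝒦⟩
  choose H hHopen hHspec using key2
  set 𝒦 : X → Set (Set X) := fun x => {A ∈ 𝒜 | x ∈ A} with h𝒦def
  have h𝒦sub : ∀ x, 𝒦 x ⊆ 𝒜 := fun x => sep_subset _ _
  set W : X → Set X := fun x => H (𝒦 x) ∩ ⋂ A ∈ 𝒦 x, O A with hWdef
  have hWopen : ∀ x, IsOpen (W x) := by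
    intro x
    exact (hHopen _).inter (Set.Finite.isOpen_biInter (hfin.subset (h𝒦sub x))
      (fun A _ => hOopen A))
  refine ⟨⋃ x ∈ f.preimage V, W x, isOpen_biUnion (fun x _ => hWopen x), ?_⟩
  apply Subset.antisymm
  · intro x hx
    obtain ⟨v, hvV, hvf⟩ := (PFun.mem_preimage _ _ _).mp hx
    have hxdom : x ∈ f.Dom := Part.dom_iff_mem.mpr ⟨v, hvf⟩
    refine ⟨hxdom, mem_biUnion hx ?_⟩
    constructor
    · -- x ∈ H (𝒦 x)
      obtain ⟨A0, hA0, hxA0⟩ := hdom hxdom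
      refine ((hHspec (𝒦 x) (h𝒦sub x)).1) ⟨⟨A0, ⟨hA0, hxA0⟩, hxA0⟩, ?_⟩
      rintro ⟨B, ⟨hB𝒜, hB𝒦⟩, hxB⟩
      exact hB𝒦 ⟨hB𝒜, hxB⟩
    · refine mem_biInter (fun A hA => ?_)
      have : x ∈ (pRestrict f A).preimage V :=
        (PFun.mem_preimage _ _ _).mpr ⟨v, hvV, mem_pRestrict.mpr ⟨hA.2, hvf⟩⟩
      rw [hOeq A hA.1] at this
      exact this.2
  · intro y hymem
    obtain ⟨hydom, hy⟩ := hymem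
    simp only [mem_iUnion] at hy
    obtain ⟨x, hx, hyH, hyO⟩ := hy
    -- find A ∈ 𝒦 x with y ∈ A
    have hyA : ∃ A ∈ 𝒦 x, y ∈ A := by
      obtain ⟨A0, hA0, hyA0⟩ := hdom hydom
      by_cases hA0𝒦 : A0 ∈ 𝒦 x
      · exact ⟨A0, hA0𝒦, hyA0⟩
      · have hy𝒦 : y ∈ ⋃₀ 𝒦 x := by
          by_contra hno
          have hmem : y ∈ H (𝒦 x) ∩ (⋃₀ (𝒜 \ 𝒦 x) \ ⋃₀ 𝒦 x) :=
            ⟨hyH, ⟨A0, ⟨hA0, hA0𝒦⟩, hyA0⟩, hno⟩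
          rw [(hHspec (𝒦 x) (h𝒦sub x)).2] at hmem
          exact hmem
        obtain ⟨A, hA, hyA⟩ := hy𝒦
        exact ⟨A, hA, hyA⟩
    obtain ⟨A, hA, hyA⟩ := hyA
    have hyOA : y ∈ O A := by simpa using mem_iInter₂.mp hyO A hA
    have : y ∈ (pRestrict f A).preimage V := by
      rw [hOeq A hA.1]
      exact ⟨⟨hyA, hydom⟩, hyOA⟩
    obtain ⟨v, hvV, hvm⟩ := (PFun.mem_preimage _ _ _).mp this
    exact (PFun.mem_preimage _ _ _).mpr ⟨v, hvV, (mem_pRestrict.mp hvm).2⟩
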